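/- arXiv:math/0505315 — 4 statements merged into one kernel-verified Lean document; each statement's English description precedes it below -/
import Mathlib

section
/- Let U and A be n×n matrices over a commutative ring K with A alternating. Then there exists an alternating n×n matrix B over K satisfying the matrix equation A·adj(U) = Uᵀ·B, and moreover every entry of B lies in the ideal I₁(A)·I_{n−2}(U) of K, where I₁(A) is the ideal generated by the entries of A and I_{n−2}(U) is the ideal generated by all (n−2)×(n−2) minors of U. -/
open Matrix

section Aux

variable {K : Type*} [CommRing K] {n : ℕ}

/-- Mixed double cofactor of `U`: the determinant of `U` with row `a` replaced by the
standard basis vector `e b` and row `c` by `e d`, set to `0` when `a = c`. -/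
private def D2 (U : Matrix (Fin n) (Fin n) K) (a b c d : Fin n) : K :=
  if a = c then 0
  else ((U.updateRow a (Pi.single b 1)).updateRow c (Pi.single d 1)).det

omit [CommRing K] in
private lemma updateRow_comm' (U : Matrix (Fin n) (Fin n) K) {a c : Fin n} (h : a ≠ c)
    (v w : Fin n → K) :
    (U.updateRow a v).updateRow c w = (U.updateRow c w).updateRow a v := by
  ext x y
  rcases eq_or_ne x a with rfl | hxa
  · rw [Matrix.updateRow_ne h, Matrix.updateRow_self, Matrix.updateRow_self]
  · rcases eq_or_ne x c with rfl | hxc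
    · rw [Matrix.updateRow_self, Matrix.updateRow_ne hxa, Matrix.updateRow_self]
    · rw [Matrix.updateRow_ne hxc, Matrix.updateRow_ne hxa, Matrix.updateRow_ne hxa,
        Matrix.updateRow_ne hxc]

omit [CommRing K] in
private lemma updateRow_twice (U : Matrix (Fin n) (Fin n) K) (c : Fin n) (v w : Fin n → K) :
    (U.updateRow c v).updateRow c w = U.updateRow c w := by
  ext x y
  rcases eq_or_ne x c with rfl | hx
  · rw [Matrix.updateRow_self, Matrix.updateRow_self]
  · rw [Matrix.updateRow_ne hx, Matrix.updateRow_ne hx, Matrix.updateRow_ne hx]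

private lemma D2_swap (U : Matrix (Fin n) (Fin n) K) (a b c d : Fin n) :
    D2 U c b a d = - D2 U a b c d := by
  rcases eq_or_ne a c with rfl | h
  · simp [D2]
  · rw [D2, if_neg (Ne.symm h), D2, if_neg h]
    have hM : (U.updateRow c (Pi.single b 1)).updateRow a (Pi.single d 1)
        = ((U.updateRow a (Pi.single b 1)).updateRow c (Pi.single d 1)).submatrix
            (Equiv.swap a c) id := by
      ext x y
      rcases eq_or_ne x a with rfl | hxa
      · rw [Matrix.updateRow_self, Matrix.submatrix_apply, Equiv.swap_apply_left, id_eq,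
          Matrix.updateRow_self]
      · rcases eq_or_ne x c with rfl | hxc
        · rw [Matrix.updateRow_ne hxa, Matrix.updateRow_self, Matrix.submatrix_apply,
            Equiv.swap_apply_right, id_eq, Matrix.updateRow_ne h, Matrix.updateRow_self]
        · rw [Matrix.updateRow_ne hxa, Matrix.updateRow_ne hxc, Matrix.submatrix_apply,
            Equiv.swap_apply_of_ne_of_ne hxa hxc, id_eq, Matrix.updateRow_ne hxc,
            Matrix.updateRow_ne hxa]
    rw [hM, Matrix.det_permute, Equiv.Perm.sign_swap h]
    simp

private lemma D2_key (U : Matrix (Fin n) (Fin n) K) (a b c d : Fin n) :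
    ∑ k, U k b * D2 U k a c d
      = (if a = b then (U.updateRow c (Pi.single d 1)).det else 0)
        - (if b = d then (U.updateRow c (Pi.single a 1)).det else 0) := by
  set V := U.updateRow c (Pi.single d 1) with hV
  have hadj : ∀ x, adjugate V x c = (U.updateRow c (Pi.single x 1)).det := by
    intro x
    rw [adjugate_apply, hV, updateRow_twice]
  have hD : ∀ k, D2 U k a c d = if k = c then 0 else adjugate V a k := by
    intro k
    rcases eq_or_ne k c with rfl | hk
    · simp [D2]
    · rw [D2, if_neg hk, if_neg hk, adjugate_apply, updateRow_comm' U hk]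
  have hsum : ∑ k, U k b * D2 U k a c d
      = (∑ k, adjugate V a k * U k b) - adjugate V a c * U c b := by
    have hterm : ∀ k ∈ Finset.univ, U k b * D2 U k a c d
        = adjugate V a k * U k b - (if k = c then adjugate V a c * U c b else 0) := by
      intro k _
      rw [hD k]
      rcases eq_or_ne k c with rfl | hk
      · simp
      · rw [if_neg hk, if_neg hk]; ring
    rw [Finset.sum_congr rfl hterm, Finset.sum_sub_distrib,
      Finset.sum_ite_eq' Finset.univ c]
    simp
  have hmul : (∑ k, adjugate V a k * U k b)
      = (if a = b then V.det else 0)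
        + adjugate V a c * (U c b - if b = d then 1 else 0) := by
    have hterm : ∀ k ∈ Finset.univ, adjugate V a k * U k b
        = adjugate V a k * V k b + (if k = c then adjugate V a c * (U c b - V c b) else 0) := by
      intro k _
      rcases eq_or_ne k c with rfl | hk
      · rw [if_pos rfl]; ring
      · rw [if_neg hk, show V k b = U k b from by rw [hV, Matrix.updateRow_ne hk]]
        ring
    rw [Finset.sum_congr rfl hterm, Finset.sum_add_distrib,
      Finset.sum_ite_eq' Finset.univ c]
    have h1 : ∑ k, adjugate V a k * V k b = (adjugate V * V) a b := (Matrix.mul_apply).symm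
    have h2 : (adjugate V * V) a b = if a = b then V.det else 0 := by
      rw [Matrix.adjugate_mul]
      simp [Matrix.one_apply, Matrix.smul_apply, mul_ite]
    have h3 : V c b = if b = d then 1 else 0 := by
      rw [hV, Matrix.updateRow_self, Pi.single_apply]
    rw [h1, h2, h3]
    simp
  rw [hsum, hmul, hadj a]
  split_ifs <;> ring

private lemma D2_mem (m : ℕ) (U : Matrix (Fin (m + 2)) (Fin (m + 2)) K)
    (r i s j : Fin (m + 2)) (hij : i ≠ j) :
    D2 U r i s j ∈ Ideal.span { d : K | ∃ f g : Fin m → Fin (m + 2),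
      StrictMono f ∧ StrictMono g ∧ d = (U.submatrix f g).det } := by
  rcases eq_or_ne r s with rfl | hrs
  · simp [D2]
  · rw [D2, if_neg hrs]
    obtain ⟨r', hr'⟩ := Fin.exists_succAbove_eq hrs
    obtain ⟨i', hi'⟩ := Fin.exists_succAbove_eq hij
    have h1 : ((U.updateRow r (Pi.single i 1)).updateRow s (Pi.single j 1)).det
        = (-1) ^ (s + j : ℕ)
          * ((U.updateRow r (Pi.single i 1)).submatrix s.succAbove j.succAbove).det := by
      rw [← adjugate_apply, adjugate_fin_succ_eq_det_submatrix]
    have h2 : (U.updateRow r (Pi.single i 1)).submatrix s.succAbove j.succAbove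
        = (U.submatrix s.succAbove j.succAbove).updateRow r' (Pi.single i' 1) := by
      ext x y
      rcases eq_or_ne x r' with rfl | hx
      · rw [Matrix.updateRow_self, Matrix.submatrix_apply, hr', Matrix.updateRow_self,
          Pi.single_apply, Pi.single_apply, ← hi']
        simp [ (Fin.succAbove_right_injective (p := j)).eq_iff ]
      · have hne : s.succAbove x ≠ r := fun hc =>
          hx (Fin.succAbove_right_injective (p := s) (hc.trans hr'.symm))
        rw [Matrix.updateRow_ne hx, Matrix.submatrix_apply, Matrix.submatrix_apply,
          Matrix.updateRow_ne hne]
    have h3 : ((U.submatrix s.succAbove j.succAbove).updateRow r' (Pi.single i' 1)).det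
        = (-1) ^ (r' + i' : ℕ)
          * (((U.submatrix s.succAbove j.succAbove)).submatrix r'.succAbove i'.succAbove).det := by
      rw [← adjugate_apply, adjugate_fin_succ_eq_det_submatrix]
    rw [h1, h2, h3, Matrix.submatrix_submatrix]
    refine Ideal.mul_mem_left _ _ (Ideal.mul_mem_left _ _ (Ideal.subset_span ?_))
    exact ⟨s.succAbove ∘ r'.succAbove, j.succAbove ∘ i'.succAbove,
      (Fin.strictMono_succAbove s).comp (Fin.strictMono_succAbove r'),
      (Fin.strictMono_succAbove j).comp (Fin.strictMono_succAbove i'), rfl⟩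

end Aux

/-- Let `U` and `A` be `n × n` matrices over a commutative ring `K` with `A`
alternating.  Then there exists an alternating `n × n` matrix `B` over `K` satisfying
`A * adjugate U = Uᵀ * B`, and every entry of `B` lies in the ideal `I₁(A) * I_{n-2}(U)`,
where `I₁(A)` is the ideal generated by the entries of `A` and `I_{n-2}(U)` is the ideal
generated by all `(n-2) × (n-2)` minors of `U`. -/
theorem statement0 (K : Type*) [CommRing K] (n : ℕ)
    (U A : Matrix (Fin n) (Fin n) K)
    (hAalt : Aᵀ = -A ∧ ∀ i, A i i = 0) :
    ∃ B : Matrix (Fin n) (Fin n) K,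
      (Bᵀ = -B ∧ ∀ i, B i i = 0) ∧
      A * U.adjugate = Uᵀ * B ∧
      ∀ r s : Fin n, B r s ∈
        Ideal.span (Set.range fun p : Fin n × Fin n => A p.1 p.2) *
        Ideal.span { d : K | ∃ f g : Fin (n - 2) → Fin n,
          StrictMono f ∧ StrictMono g ∧ d = (U.submatrix f g).det } := by
  obtain ⟨hT, hdiag⟩ := hAalt
  have hA' : ∀ i j : Fin n, A j i = - A i j := by
    intro i j
    have := congrFun (congrFun hT i) j
    simpa using this
  refine ⟨Matrix.of fun k s => ∑ i, ∑ j, if i < j then A i j * D2 U k i s j else 0,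
    ⟨?_, ?_⟩, ?_, ?_⟩
  · -- transpose
    ext k s
    simp only [Matrix.transpose_apply, Matrix.neg_apply, Matrix.of_apply]
    have : ∀ i ∈ Finset.univ, ∀ j ∈ Finset.univ,
        (if i < j then A i j * D2 U s i k j else 0)
          = -(if i < j then A i j * D2 U k i s j else 0) := by
      intro i _ j _
      split_ifs with hij
      · rw [D2_swap]; ring
      · simp
    calc (∑ i, ∑ j, if i < j then A i j * D2 U s i k j else 0)
        = ∑ i, ∑ j, -(if i < j then A i j * D2 U k i s j else 0) :=
          Finset.sum_congr rfl fun i hi => Finset.sum_congr rfl fun j hj => this i hi j hj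
      _ = -∑ i, ∑ j, (if i < j then A i j * D2 U k i s j else 0) := by
          simp [Finset.sum_neg_distrib]
  · -- diagonal
    intro k
    simp only [Matrix.of_apply]
    refine Finset.sum_eq_zero fun i _ => Finset.sum_eq_zero fun j _ => ?_
    split_ifs with hij
    · simp [D2]
    · rfl
  · -- the matrix equation
    ext r s
    rw [Matrix.mul_apply, Matrix.mul_apply]
    symm
    calc (∑ k, Uᵀ r k * (Matrix.of fun k s => ∑ i, ∑ j,
            if i < j then A i j * D2 U k i s j else 0) k s)
        = ∑ i, ∑ j, (if i < j then A i j * ∑ k, U k r * D2 U k i s j else 0) := by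
          have h1 : ∀ k ∈ Finset.univ, Uᵀ r k * (Matrix.of fun k s => ∑ i, ∑ j,
              if i < j then A i j * D2 U k i s j else 0) k s
              = ∑ i, ∑ j, (if i < j then A i j * (U k r * D2 U k i s j) else 0) := by
            intro k _
            rw [Matrix.transpose_apply, Matrix.of_apply, Finset.mul_sum]
            refine Finset.sum_congr rfl fun i _ => ?_
            rw [Finset.mul_sum]
            refine Finset.sum_congr rfl fun j _ => ?_
            split_ifs
            · ring
            · exact mul_zero _
          rw [Finset.sum_congr rfl h1, Finset.sum_comm]
          refine Finset.sum_congr rfl fun i _ => ?_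
          rw [Finset.sum_comm]
          refine Finset.sum_congr rfl fun j _ => ?_
          split_ifs with hij
          · rw [Finset.mul_sum]
          · exact Finset.sum_const_zero
      _ = ∑ i, ∑ j, (if i < j then A i j * ((if i = r then adjugate U j s else 0)
              - (if r = j then adjugate U i s else 0)) else 0) := by
          refine Finset.sum_congr rfl fun i _ => Finset.sum_congr rfl fun j _ => ?_
          by_cases hij : i < j
          · rw [if_pos hij, if_pos hij, D2_key U i r s j, ← adjugate_apply, ← adjugate_apply]
          · rw [if_neg hij, if_neg hij]
      _ = (∑ i, ∑ j, if i = r then (if i < j then A i j * adjugate U j s else 0) else 0)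
            - (∑ i, ∑ j, if r = j then (if i < j then A i j * adjugate U i s else 0) else 0) := by
          rw [← Finset.sum_sub_distrib]
          refine Finset.sum_congr rfl fun i _ => ?_
          rw [← Finset.sum_sub_distrib]
          refine Finset.sum_congr rfl fun j _ => ?_
          split_ifs <;> ring
      _ = (∑ j, if r < j then A r j * adjugate U j s else 0)
            - (∑ i, if i < r then A i r * adjugate U i s else 0) := by
          congr 1
          · rw [Finset.sum_comm]
            refine Finset.sum_congr rfl fun j _ => ?_
            rw [Finset.sum_ite_eq' Finset.univ r
              fun i => if i < j then A i j * adjugate U j s else 0]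
            simp
          · refine Finset.sum_congr rfl fun i _ => ?_
            rw [Finset.sum_ite_eq Finset.univ r
              fun j => if i < j then A i j * adjugate U i s else 0]
            simp
      _ = ∑ j, A r j * adjugate U j s := by
          rw [← Finset.sum_sub_distrib]
          refine Finset.sum_congr rfl fun j _ => ?_
          rcases lt_trichotomy r j with h | h | h
          · rw [if_pos h, if_neg (asymm h)]
            ring
          · rw [if_neg (h ▸ lt_irrefl r), if_neg (h ▸ lt_irrefl r), ← h, hdiag]
            ring
          · rw [if_neg (asymm h), if_pos h, hA' r j]
            ring
  · -- membership
    intro r s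
    simp only [Matrix.of_apply]
    refine Ideal.sum_mem _ fun i _ => Ideal.sum_mem _ fun j _ => ?_
    split_ifs with hij
    · have h2 : 2 ≤ n := by
        have h1 : (i : ℕ) < (j : ℕ) := hij
        have := j.isLt
        omega
      obtain ⟨m, rfl⟩ : ∃ m, n = m + 2 := ⟨n - 2, by omega⟩
      exact Ideal.mul_mem_mul (Ideal.subset_span ⟨(i, j), rfl⟩)
        (D2_mem m U r i s j (ne_of_lt hij))
    · exact zero_mem _
end

section
/- Let U and A be n×n matrices over a commutative ring K with A alternating. Then there exists an alternating n×n matrix B′ over K satisfying the matrix equation adj(U)·A = B′·Uᵀ. -/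
/-!
Write the alternating matrix as `A = ∑_{k<l} A_kl (E_kl - E_lk)`. For `k ≠ l` let `C^{kl}_{im}`
be the determinant of `U` with rows `k` and `l` replaced by the unit rows `e_i` and `e_m`; it is
alternating in `(i, m)`. Expanding along row `l`, `(C^{kl} Uᵀ)_{ij}` is the determinant of `U`
with row `k` replaced by `e_i` and row `l` by `U_j`, which is `adj(U)_{ik}` if `j = l`,
`-adj(U)_{il}` if `j = k` and `0` otherwise. So `C^{kl} Uᵀ = adj(U) (E_kl - E_lk)` and
`B' = ∑_{k<l} A_kl C^{kl}` works. Summing over `k < l` rather than halving a sum over all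
pairs keeps the argument valid in characteristic `2`.
-/

open Matrix Finset

namespace Matrix

def alternatingSubmodule (ι R : Type*) [Ring R] : Submodule R (Matrix ι ι R) where
  carrier := {A | Aᵀ = -A ∧ ∀ i, A i i = 0}
  add_mem' := by
    rintro A B ⟨hA, hA'⟩ ⟨hB, hB'⟩
    exact ⟨by rw [transpose_add, hA, hB, neg_add], fun i => by simp [hA', hB']⟩
  zero_mem' := ⟨by simp, fun _ => rfl⟩
  smul_mem' := by
    rintro c A ⟨hA, hA'⟩
    exact ⟨by rw [transpose_smul, hA, smul_neg], fun i => by simp [hA']⟩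

variable {ι R : Type*}

theorem eq_sum_smul_single_sub_single [Fintype ι] [LinearOrder ι] [Ring R] {A : Matrix ι ι R}
    (hA : A ∈ alternatingSubmodule ι R) :
    A = ∑ k, ∑ l with k < l, A k l • (single k l 1 - single l k 1) := by
  obtain ⟨hAt, hAd⟩ := hA
  ext i j
  simp only [Matrix.sum_apply, smul_apply, sub_apply, single_apply, smul_eq_mul, mul_sub,
    sum_sub_distrib, ite_and, mul_ite, mul_one, mul_zero]
  simp only [sum_ite_irrel, sum_const_zero, sum_ite_eq', mem_univ, mem_filter, if_true, true_and]
  rw [← sum_filter, sum_ite_eq']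
  simp only [mem_filter, mem_univ, true_and]
  have hji : A j i = -A i j := by simpa using congrFun₂ hAt i j
  rcases lt_trichotomy i j with h | rfl | h
  · simp [h, h.not_gt]
  · simp [hAd]
  · simp [h, h.not_gt, hji]

section RowPairAdjugate

variable [Fintype ι] [DecidableEq ι] [CommRing R]

theorem det_updateRow_updateRow_swap (M : Matrix ι ι R) {k l : ι} (hkl : k ≠ l) (x y : ι → R) :
    det ((M.updateRow k x).updateRow l y) = -det ((M.updateRow k y).updateRow l x) := by
  have hswap : (M.updateRow k x).updateRow l y =
      ((M.updateRow k y).updateRow l x).submatrix (Equiv.swap k l) id := by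
    ext i j
    rcases eq_or_ne i k with rfl | hik
    · simp [updateRow_apply, hkl]
    rcases eq_or_ne i l with rfl | hil
    · simp [updateRow_apply, hkl]
    · simp [updateRow_apply, Equiv.swap_apply_of_ne_of_ne hik hil, hik, hil]
  simp [hswap, det_permute, Equiv.Perm.sign_swap hkl]

def rowPairAdjugate (U : Matrix ι ι R) (k l : ι) : Matrix ι ι R :=
  of fun i m => det ((U.updateRow k (Pi.single i 1)).updateRow l (Pi.single m 1))

theorem rowPairAdjugate_apply_eq_adjugate (U : Matrix ι ι R) (k l i m : ι) :
    rowPairAdjugate U k l i m = adjugate (U.updateRow k (Pi.single i 1)) m l :=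
  (adjugate_apply _ _ _).symm

theorem rowPairAdjugate_transpose {U : Matrix ι ι R} {k l : ι} (hkl : k ≠ l) :
    (rowPairAdjugate U k l)ᵀ = -rowPairAdjugate U k l := by
  ext i m
  exact det_updateRow_updateRow_swap U hkl _ _

theorem rowPairAdjugate_apply_self {U : Matrix ι ι R} {k l : ι} (hkl : k ≠ l) (i : ι) :
    rowPairAdjugate U k l i i = 0 :=
  det_zero_of_row_eq hkl (by simp [hkl])

theorem rowPairAdjugate_mem_alternatingSubmodule {U : Matrix ι ι R} {k l : ι} (hkl : k ≠ l) :
    rowPairAdjugate U k l ∈ alternatingSubmodule ι R :=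
  ⟨rowPairAdjugate_transpose hkl, rowPairAdjugate_apply_self hkl⟩

theorem rowPairAdjugate_swap {U : Matrix ι ι R} {k l : ι} (hkl : k ≠ l) :
    rowPairAdjugate U l k = -rowPairAdjugate U k l := by
  rw [← rowPairAdjugate_transpose hkl]
  ext i m
  exact congrArg det (updateRow_comm U hkl.symm _ _)

theorem rowPairAdjugate_mul_transpose_apply_of_ne (U : Matrix ι ι R) {j k : ι} (hjk : j ≠ k)
    (l i : ι) :
    (rowPairAdjugate U k l * Uᵀ) i j = if j = l then adjugate U i k else 0 := by
  set V := U.updateRow k (Pi.single i 1)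
  calc (rowPairAdjugate U k l * Uᵀ) i j = (V * adjugate V) j l := by
        simp only [mul_apply, rowPairAdjugate_apply_eq_adjugate, transpose_apply, V,
          updateRow_ne hjk, mul_comm]
    _ = if j = l then adjugate U i k else 0 := by
        rw [mul_adjugate, smul_apply, one_apply, adjugate_apply U i k, smul_eq_mul, mul_ite,
          mul_one, mul_zero]

theorem rowPairAdjugate_mul_transpose (U : Matrix ι ι R) {k l : ι} (hkl : k ≠ l) :
    rowPairAdjugate U k l * Uᵀ = adjugate U * (single k l 1 - single l k 1) := by
  ext i j
  have hsingle : ∀ a b,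
      (adjugate U * single a b (1 : R)) i j = if j = b then adjugate U i a else 0 := by
    intro a b
    split_ifs with hjb
    · rw [hjb, mul_single_apply_same, mul_one]
    · exact mul_single_apply_of_ne (hbj := hjb) ..
  rw [mul_sub, sub_apply, hsingle, hsingle]
  rcases eq_or_ne j k with rfl | hjk
  · rw [← neg_neg (rowPairAdjugate U j l), ← rowPairAdjugate_swap hkl, neg_mul, neg_apply,
      rowPairAdjugate_mul_transpose_apply_of_ne U hkl]
    simp [hkl]
  · rw [rowPairAdjugate_mul_transpose_apply_of_ne U hjk]
    simp [hjk]

end RowPairAdjugate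
end Matrix

/-- Let `U` and `A` be `n × n` matrices over a commutative ring `K` with `A`
alternating.  Then there exists an alternating `n × n` matrix `B'` over `K` satisfying
`adjugate U * A = B' * Uᵀ`. -/
theorem statement2 (K : Type*) [CommRing K] (n : ℕ)
    (U A : Matrix (Fin n) (Fin n) K)
    (hAalt : Aᵀ = -A ∧ ∀ i, A i i = 0) :
    ∃ B' : Matrix (Fin n) (Fin n) K,
      (B'ᵀ = -B' ∧ ∀ i, B' i i = 0) ∧
      U.adjugate * A = B' * Uᵀ := by
  refine ⟨∑ k, ∑ l with k < l, A k l • rowPairAdjugate U k l, ?_, ?_⟩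
  · exact Submodule.sum_mem _ fun k _ => Submodule.sum_mem _ fun l hl =>
      Submodule.smul_mem _ _ (rowPairAdjugate_mem_alternatingSubmodule (mem_filter.1 hl).2.ne)
  · calc U.adjugate * A
        = U.adjugate * ∑ k, ∑ l with k < l, A k l • (single k l 1 - single l k 1) := by
          rw [← eq_sum_smul_single_sub_single hAalt]
      _ = (∑ k, ∑ l with k < l, A k l • rowPairAdjugate U k l) * Uᵀ := by
          simp only [Finset.mul_sum, Finset.sum_mul, mul_smul_comm, smul_mul]
          refine Finset.sum_congr rfl fun k _ => Finset.sum_congr rfl fun l hl => ?_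
          rw [rowPairAdjugate_mul_transpose U (mem_filter.1 hl).2.ne]
end

section
/- Let U, A, A′ be n×n matrices over a commutative ring K with A and A′ alternating, and assume det(U) is a nonzerodivisor in K. Let B be the (unique) alternating matrix with A·adj(U) = Uᵀ·B and let B′ be the (unique) alternating matrix with adj(U)·A′ = B′·Uᵀ. Then there exist an element r ∈ K and an n×n matrix C over K such that B·A′ = r·1ₙ + C·Uᵀ and A·B′ = r·1ₙ + Uᵀ·C, where 1ₙ is the n×n identity matrix. -/
/-!
Put `H = adj Uᵀ` and `d = det U`. Multiplying `A * adj U = Uᵀ * B` on the left by `H` gives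
`d • B = H A Hᵀ`, and writing the alternating `A` as `L - Lᵀ` expresses its entries through the
`2 × 2` minors of `H`. By Jacobi, a `k × k` minor of an adjugate is divisible by `d ^ (k - 1)`: if
`Z` is the identity with `k` rows replaced by rows of `adj M`, those rows of `Z * M` are `d` times
unit vectors. So the entries of `B` are combinations of `2 × 2` minors of `H` divided by `d`, and
expanding `B A' H` leaves `r • H` plus combinations of `3 × 3` minors of `H` divided by `d`, which
are again divisible by `d`. Thus `B A' H = r H + d C = (r + C Uᵀ) H`; cancelling `H` gives the
first identity, and the second follows by cancelling `Uᵀ` in `A B' Uᵀ = A adj(U) A' = Uᵀ B A'`.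
-/

open Function
open scoped nonZeroDivisors

namespace Matrix

section Alternating

theorem exists_eq_sub_transpose {α n : Type*} [AddGroup α] [LinearOrder n]
    {A : Matrix n n α} (hA : Aᵀ = -A ∧ ∀ i, A i i = 0) : ∃ L : Matrix n n α, A = L - Lᵀ := by
  refine ⟨of fun i j => if i < j then A i j else 0, ?_⟩
  ext i j
  have hji : A j i = -A i j := by simpa using congr_fun₂ hA.1 i j
  rcases lt_trichotomy i j with h | rfl | h
  · simp [h, h.not_gt]
  · simp [hA.2]
  · simp [h, h.not_gt, hji]

theorem mul_sub_transpose_mul_apply {K n : Type*} [CommRing K] [Fintype n]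
    (X L Y : Matrix n n K) (i j : n) :
    (X * (L - Lᵀ) * Y) i j = ∑ x, ∑ y, L x y * (X i x * Y y j - X i y * Y x j) := by
  simp only [mul_apply, sub_apply, transpose_apply, mul_sub, sub_mul, Finset.sum_sub_distrib,
    Finset.sum_mul]
  congr 1
  · rw [Finset.sum_comm]
    exact Finset.sum_congr rfl fun x _ => Finset.sum_congr rfl fun y _ => by ring
  · exact Finset.sum_congr rfl fun x _ => Finset.sum_congr rfl fun y _ => by ring

end Alternating

section UpdateRows

variable {α n : Type*} [DecidableEq n] {k : ℕ} {s : Fin k → n}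

noncomputable def updateRows (M : Matrix n n α) (s : Fin k → n) (v : Fin k → n → α) :
    Matrix n n α :=
  of fun i => if h : ∃ p, s p = i then v h.choose else M i

theorem updateRows_apply_self (M : Matrix n n α) (v : Fin k → n → α) (hs : Injective s)
    (p : Fin k) : updateRows M s v (s p) = v p := by
  have h : ∃ q, s q = s p := ⟨p, rfl⟩
  funext j
  simp only [updateRows, of_apply, dif_pos h, hs h.choose_spec]

theorem updateRows_apply_of_forall_ne (M : Matrix n n α) (v : Fin k → n → α) {i : n}
    (hi : ∀ p, s p ≠ i) : updateRows M s v i = M i := by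
  funext j
  simp [updateRows, hi]

end UpdateRows

section Jacobi

variable {K n : Type*} [CommRing K] [Fintype n] [DecidableEq n] {k : ℕ} {s : Fin k → n}

theorem updateRows_mul (X M : Matrix n n K) (v : Fin k → n → K) :
    updateRows X s v * M = updateRows (X * M) s fun p => v p ᵥ* M := by
  ext i j
  by_cases h : ∃ p, s p = i <;> simp [updateRows, h, mul_apply, vecMul, dotProduct]

theorem adjugate_row_vecMul (M : Matrix n n K) (i : n) :
    M.adjugate i ᵥ* M = M.det • Pi.single i 1 := by
  ext j
  simpa [vecMul, dotProduct, mul_apply, one_apply, Pi.single_apply, eq_comm] using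
    congr_fun₂ (adjugate_mul M) i j

theorem det_updateRows_smul (M : Matrix n n K) (v : Fin k → n → K) (hs : Injective s) (c : K) :
    (updateRows M s fun p => c • v p).det = c ^ k * (updateRows M s v).det := by
  have hdiag : (updateRows M s fun p => c • v p) =
      diagonal (fun i => if ∃ p, s p = i then c else 1) * updateRows M s v := by
    ext i j
    by_cases h : ∃ p, s p = i <;> simp [updateRows, h, diagonal_mul]
  rw [hdiag, det_mul, det_diagonal, Finset.prod_ite, Finset.prod_const_one, mul_one,
    Finset.prod_const]
  congr
  simp [Finset.card_image_of_injective _ hs]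

theorem det_updateRows_one (v : Fin k → n → K) (hs : Injective s) :
    (updateRows 1 s v).det = (of fun p q => v p (s q)).det := by
  rw [twoBlockTriangular_det _ (fun i => ∃ p, s p = i)]
  · have hcompl : toSquareBlockProp (updateRows 1 s v) (fun i => ¬∃ p, s p = i) = 1 := by
      ext ⟨i, hi⟩ ⟨j, hj⟩
      simp [toSquareBlockProp_def, updateRows_apply_of_forall_ne _ _ (not_exists.mp hi),
        one_apply, Subtype.ext_iff]
    let e : Fin k ≃ {i // ∃ p, s p = i} := Equiv.ofInjective s hs
    rw [hcompl, det_one, mul_one, ← det_submatrix_equiv_self e]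
    congr 1
    ext p q
    change updateRows 1 s v (s p) (s q) = v p (s q)
    rw [updateRows_apply_self _ _ hs]
  · rintro i hi j ⟨p, rfl⟩
    rw [updateRows_apply_of_forall_ne _ _ (not_exists.mp hi), one_apply_ne]
    exact fun h => hi ⟨p, h.symm⟩

theorem det_submatrix_adjugate_mul_det (M : Matrix n n K) (t : Fin k → n) (hs : Injective s) :
    (M.adjugate.submatrix t s).det * M.det =
      M.det ^ k * (updateRows M s fun p => Pi.single (t p) 1).det := by
  have hZ : updateRows 1 s (fun p => M.adjugate (t p)) * M =
      updateRows M s fun p => M.det • Pi.single (t p) 1 := by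
    simp only [updateRows_mul, one_mul, adjugate_row_vecMul]
  have := congrArg det hZ
  rwa [det_mul, det_updateRows_one _ hs, det_updateRows_smul _ _ hs] at this

theorem det_pow_dvd_det_submatrix_adjugate {M : Matrix n n K} (hM : M.det ∈ K⁰)
    (t s : Fin k → n) : M.det ^ (k - 1) ∣ (M.adjugate.submatrix t s).det := by
  by_cases hs : Injective s
  · cases k with
    | zero => simp
    | succ k =>
      rw [← dvd_cancel_right_mem_nonZeroDivisors hM, det_submatrix_adjugate_mul_det _ _ hs,
        Nat.add_sub_cancel, ← pow_succ]
      exact dvd_mul_right _ _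
  · obtain ⟨p, q, hpq, hne⟩ : ∃ p q, s p = s q ∧ p ≠ q := by
      simpa [Injective] using hs
    rw [det_zero_of_column_eq hne fun i => by simp [hpq]]
    exact dvd_zero _

theorem det_dvd_adjugate_mul_sub {M : Matrix n n K} (hM : M.det ∈ K⁰) (i j a b : n) :
    M.det ∣ M.adjugate i a * M.adjugate j b - M.adjugate i b * M.adjugate j a := by
  have := det_pow_dvd_det_submatrix_adjugate hM ![i, j] ![a, b]
  rw [det_fin_two] at this
  simpa using this

/-- With `q` the `2 × 2` minors of `adj M` divided by `det M`, the expression is a `3 × 3` minor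
of `adj M`, expanded along its first column, divided by `det M`. -/
theorem det_dvd_adjugate_cofactor_expansion {M : Matrix n n K} (hM : M.det ∈ K⁰)
    {q : n → n → n → n → K}
    (hq : ∀ i j a b, M.adjugate i a * M.adjugate j b - M.adjugate i b * M.adjugate j a =
      M.det * q i j a b) (i j k a b c : n) :
    M.det ∣ M.adjugate i a * q j k b c - M.adjugate j a * q i k b c +
      M.adjugate k a * q i j b c := by
  rw [← dvd_cancel_left_mem_nonZeroDivisors hM, ← pow_two]
  convert det_pow_dvd_det_submatrix_adjugate hM ![i, j, k] ![a, b, c] using 1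
  simp only [det_fin_three, submatrix_apply, Fin.isValue, cons_val_zero, cons_val_one, cons_val]
  linear_combination -M.adjugate i a * hq j k b c + M.adjugate j a * hq i k b c -
    M.adjugate k a * hq i j b c

theorem exists_mul_sub_transpose_mul_adjugate {M : Matrix n n K} (hM : M.det ∈ K⁰)
    (L L' B : Matrix n n K) (hB : M.det • B = M.adjugate * (L - Lᵀ) * M.adjugateᵀ) :
    ∃ (r : K) (C : Matrix n n K),
      B * (L' - L'ᵀ) * M.adjugate = r • M.adjugate + M.det • C := by
  choose q hq using det_dvd_adjugate_mul_sub hM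
  choose w hw using det_dvd_adjugate_cofactor_expansion hM hq
  have hBq : B = of fun f c => ∑ x, ∑ y, L x y * q f c x y := by
    ext f c
    apply (mul_cancel_left_mem_nonZeroDivisors hM).1
    have hfc := congr_fun₂ hB f c
    rw [smul_apply, smul_eq_mul, mul_sub_transpose_mul_apply] at hfc
    simp only [hfc, transpose_apply, of_apply, Finset.mul_sum]
    exact Finset.sum_congr rfl fun x _ => Finset.sum_congr rfl fun y _ => by
      linear_combination L x y * hq f c x y
  refine ⟨-∑ c, ∑ g, ∑ x, ∑ y, L' c g * L x y * q c g x y,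
    of fun f h => ∑ c, ∑ g, ∑ x, ∑ y, L' c g * L x y * w f c g h x y, ?_⟩
  ext f h
  simp only [mul_sub_transpose_mul_apply, hBq, add_apply, smul_apply, smul_eq_mul, of_apply,
    neg_mul, Finset.sum_mul, Finset.mul_sum, ← Finset.sum_neg_distrib, ← Finset.sum_sub_distrib,
    ← Finset.sum_add_distrib]
  refine Finset.sum_congr rfl fun c _ => Finset.sum_congr rfl fun g _ =>
    Finset.sum_congr rfl fun x _ => Finset.sum_congr rfl fun y _ => ?_
  linear_combination L' c g * L x y * hw f c g h x y

end Jacobi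

theorem mul_left_injective_of_det_mem_nonZeroDivisors {K m n : Type*} [CommRing K] [Fintype n]
    [DecidableEq n] {M : Matrix n n K} (hM : M.det ∈ K⁰) :
    Injective fun X : Matrix m n K => X * M := by
  intro X Y h
  have hd : M.det • X = M.det • Y := by
    simpa [Matrix.mul_assoc, mul_adjugate] using congrArg (· * M.adjugate) h
  ext i j
  exact (mul_cancel_left_mem_nonZeroDivisors hM).1 (by simpa using congr_fun₂ hd i j)

end Matrix

open Matrix

theorem statement3_general (K : Type*) [CommRing K] (n : ℕ)
    (U A A' B B' : Matrix (Fin n) (Fin n) K)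
    (hAalt : Aᵀ = -A ∧ ∀ i, A i i = 0)
    (hA'alt : A'ᵀ = -A' ∧ ∀ i, A' i i = 0)
    (hdet : U.det ∈ nonZeroDivisors K)
    (hB : A * U.adjugate = Uᵀ * B)
    (hB' : U.adjugate * A' = B' * Uᵀ) :
    ∃ (r : K) (C : Matrix (Fin n) (Fin n) K),
      B * A' = r • (1 : Matrix (Fin n) (Fin n) K) + C * Uᵀ ∧
      A * B' = r • (1 : Matrix (Fin n) (Fin n) K) + Uᵀ * C := by
  have hdetT : Uᵀ.det ∈ K⁰ := by rwa [det_transpose]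
  obtain ⟨L, rfl⟩ := exists_eq_sub_transpose hAalt
  obtain ⟨L', rfl⟩ := exists_eq_sub_transpose hA'alt
  have hBd : Uᵀ.det • B = Uᵀ.adjugate * (L - Lᵀ) * Uᵀ.adjugateᵀ := by
    rw [← adjugate_transpose, transpose_transpose, Matrix.mul_assoc, hB, ← Matrix.mul_assoc,
      adjugate_transpose, adjugate_mul, Matrix.smul_mul, Matrix.one_mul]
  obtain ⟨r, C, hrC⟩ := exists_mul_sub_transpose_mul_adjugate hdetT L L' B hBd
  have hBA' : B * (L' - L'ᵀ) = r • 1 + C * Uᵀ := by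
    refine mul_left_injective_of_det_mem_nonZeroDivisors (M := Uᵀ.adjugate)
      (by rw [det_adjugate]; exact pow_mem hdetT _) ?_
    simp only [hrC, Matrix.add_mul, Matrix.smul_mul, Matrix.one_mul, Matrix.mul_assoc,
      mul_adjugate, Matrix.mul_smul, Matrix.mul_one]
  refine ⟨r, C, hBA', mul_left_injective_of_det_mem_nonZeroDivisors hdetT ?_⟩
  calc (L - Lᵀ) * B' * Uᵀ = Uᵀ * (B * (L' - L'ᵀ)) := by
        rw [Matrix.mul_assoc, ← hB', ← Matrix.mul_assoc, hB, Matrix.mul_assoc]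
    _ = (r • 1 + Uᵀ * C) * Uᵀ := by
        rw [hBA', Matrix.mul_add, Matrix.add_mul, Matrix.mul_smul, Matrix.smul_mul,
          Matrix.mul_one, Matrix.one_mul, Matrix.mul_assoc]

/-- Let `U`, `A`, `A'` be `n × n` matrices over a commutative ring `K` with
`A` and `A'` alternating, and assume `det U` is a nonzerodivisor in `K`.  Let `B` be the
(unique) alternating matrix with `A * adjugate U = Uᵀ * B` and `B'` the (unique) alternating
matrix with `adjugate U * A' = B' * Uᵀ`.  Then there exist `r ∈ K` and an `n × n` matrix `C`
such that `B * A' = r • 1 + C * Uᵀ` and `A * B' = r • 1 + Uᵀ * C`. -/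
theorem statement3 (K : Type*) [CommRing K] (n : ℕ)
    (U A A' B B' : Matrix (Fin n) (Fin n) K)
    (hAalt : Aᵀ = -A ∧ ∀ i, A i i = 0)
    (hA'alt : A'ᵀ = -A' ∧ ∀ i, A' i i = 0)
    (hdet : U.det ∈ nonZeroDivisors K)
    (hBalt : Bᵀ = -B ∧ ∀ i, B i i = 0)
    (hB : A * U.adjugate = Uᵀ * B)
    (hB'alt : B'ᵀ = -B' ∧ ∀ i, B' i i = 0)
    (hB' : U.adjugate * A' = B' * Uᵀ) :
    ∃ (r : K) (C : Matrix (Fin n) (Fin n) K),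
      B * A' = r • (1 : Matrix (Fin n) (Fin n) K) + C * Uᵀ ∧
      A * B' = r • (1 : Matrix (Fin n) (Fin n) K) + Uᵀ * C :=
  statement3_general K n U A A' B B' hAalt hA'alt hdet hB hB'
end

section
/- Let K be a commutative ring and let φ and U be n×n matrices over K. Then there exists an n×n matrix V over K such that U·adj(φ) − φ·V = tr(U·adj(φ))·1ₙ, where tr denotes the trace and 1ₙ the n×n identity matrix. -/
/-!
Perturb `φ` in the direction `U` over the dual numbers `K[ε]`. Reducing modulo `ε`, the adjugate
of `φ + εU` is `adj φ + εW` for some matrix `W`, and by Jacobi's formula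
`det (φ + εU) = det φ + ε tr (adj φ · U)`. Comparing the `ε`-parts of
`(φ + εU) · adj (φ + εU) = det (φ + εU) · 1` gives `φ W + U adj φ = tr (U adj φ) · 1`,
so `V = -W` works.
-/

open Matrix TrivSqZeroExt

namespace DualNumber

variable {R : Type*} [CommRing R] {ι : Type*}

lemma fst_prod (s : Finset ι) (f : ι → DualNumber R) :
    (∏ i ∈ s, f i).fst = ∏ i ∈ s, (f i).fst :=
  map_prod (fstHom R R R) f s

lemma snd_prod [DecidableEq ι] (s : Finset ι) (f : ι → DualNumber R) :
    (∏ i ∈ s, f i).snd = ∑ i ∈ s, (f i).snd * ∏ j ∈ s.erase i, (f j).fst := by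
  induction s using Finset.induction_on with
  | empty => simp
  | insert a s ha ih =>
    rw [Finset.prod_insert ha, snd_mul, ih, Finset.sum_insert ha, Finset.erase_insert ha,
      fst_prod, Finset.mul_sum, add_comm]
    congr 1
    refine Finset.sum_congr rfl fun i hi => ?_
    rw [Finset.erase_insert_of_ne (ne_of_mem_of_not_mem hi ha).symm,
      Finset.prod_insert (fun h => ha (Finset.mem_of_mem_erase h))]
    ring

end DualNumber

namespace Matrix

lemma map_snd_mul {R l m o : Type*} [Semiring R] [Fintype m]
    (M : Matrix l m (DualNumber R)) (N : Matrix m o (DualNumber R)) :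
    (M * N).map snd = M.map fst * N.map snd + M.map snd * N.map fst := by
  ext i j
  simp [mul_apply, snd_sum, Finset.sum_add_distrib]

variable {R : Type*} [CommRing R] {n : Type*} [Fintype n] [DecidableEq n]

lemma map_fst_adjugate (M : Matrix n n (DualNumber R)) :
    (adjugate M).map fst = adjugate (M.map fst) :=
  (fstHom R R R).toRingHom.map_adjugate M

lemma det_updateCol_eq_sum (A : Matrix n n R) (i : n) (b : n → R) :
    (A.updateCol i b).det = ∑ k, adjugate A i k * b k := by
  rw [← cramer_apply, cramer_eq_adjugate_mulVec]
  rfl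

lemma det_updateCol_eq_sum_perm (A : Matrix n n R) (i : n) (b : n → R) :
    (A.updateCol i b).det =
      ∑ σ : Equiv.Perm n, σ.sign • (b (σ i) * ∏ j ∈ Finset.univ.erase i, A (σ j) j) := by
  rw [det_apply]
  refine Finset.sum_congr rfl fun σ _ => ?_
  rw [← Finset.mul_prod_erase _ _ (Finset.mem_univ i), updateCol_self]
  congr 2
  exact Finset.prod_congr rfl fun j hj => updateCol_ne (Finset.ne_of_mem_erase hj)

lemma sum_det_updateCol_eq_trace (A B : Matrix n n R) :
    ∑ i, (A.updateCol i fun k => B k i).det = trace (adjugate A * B) := by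
  simp only [det_updateCol_eq_sum, trace, diag, mul_apply]

/-- Jacobi's formula: `det (A + εB) = det A + ε tr (adj A · B)`. -/
theorem snd_det_map_inl_add_map_inr (A B : Matrix n n R) :
    (A.map inl + B.map inr : Matrix n n (DualNumber R)).det.snd = trace (adjugate A * B) := by
  rw [← sum_det_updateCol_eq_trace, det_apply, snd_sum]
  simp_rw [det_updateCol_eq_sum_perm]
  rw [Finset.sum_comm]
  refine Finset.sum_congr rfl fun σ _ => ?_
  rw [← Finset.smul_sum, Units.smul_def, Units.smul_def, snd_smul, DualNumber.snd_prod]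
  simp

theorem mul_snd_adjugate_add_mul_adjugate (A B : Matrix n n R) :
    A * (adjugate (A.map inl + B.map inr)).map snd + B * adjugate A
      = trace (adjugate A * B) • 1 := by
  set M : Matrix n n (DualNumber R) := A.map inl + B.map inr
  have hfst : M.map fst = A := by ext; simp [M]
  have hsnd : M.map snd = B := by ext; simp [M]
  have h := congrArg (Matrix.map · snd) (mul_adjugate M)
  simp only [map_snd_mul, map_fst_adjugate, hfst, hsnd] at h
  rw [h, ← snd_det_map_inl_add_map_inr]
  ext i j
  simp only [map_apply, smul_apply, one_apply]
  split_ifs <;> simp [M]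

end Matrix

/-- Let `K` be a commutative ring and let `φ` and `U` be `n × n` matrices
over `K`.  Then there exists an `n × n` matrix `V` over `K` such that
`U * adjugate φ - φ * V = trace (U * adjugate φ) • 1`. -/
theorem statement11 (K : Type*) [CommRing K] (n : ℕ)
    (φ U : Matrix (Fin n) (Fin n) K) :
    ∃ V : Matrix (Fin n) (Fin n) K,
      U * φ.adjugate - φ * V = (U * φ.adjugate).trace • (1 : Matrix (Fin n) (Fin n) K) := by
  refine ⟨-(adjugate (φ.map inl + U.map inr : Matrix _ _ (DualNumber K))).map snd, ?_⟩
  rw [mul_neg, sub_neg_eq_add, add_comm, mul_snd_adjugate_add_mul_adjugate, trace_mul_comm]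
end
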